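/- Let A and B be n×n positive definite complex matrices. Then with the linear path C(s) = (1−s)A + sB, the relative entropy satisfies S(A‖B) = Tr(A − B) + Tr((B − A)·log B) − ∫₀¹ Tr((B − A)·log((1−s)A + sB)) ds. -/

import Mathlib

open Matrix MeasureTheory
open scoped ComplexOrder

/-- Matrix logarithm on the support: apply `Real.log` (which is `0` at `0`) to the
eigenvalues of a Hermitian matrix via functional calculus; junk value `0` otherwise. -/
noncomputable def mlog {n : Type*} [Fintype n] [DecidableEq n] (A : Matrix n n ℂ) :
    Matrix n n ℂ :=
  if hA : A.IsHermitian then hA.cfc Real.log else 0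

/-- Quantum relative entropy `S(A‖B) = Tr A (log A - log B)`. -/
noncomputable def qRelEnt {n : Type*} [Fintype n] [DecidableEq n] (A B : Matrix n n ℂ) : ℝ :=
  ((A * (mlog A - mlog B)).trace).re

/-- Trace norm `‖X‖₁ = Tr √(Xᴴ X)`. -/
noncomputable def traceNorm {n : Type*} [Fintype n] [DecidableEq n] (X : Matrix n n ℂ) : ℝ :=
  ((((Matrix.posSemidef_conjTranspose_mul_self X).1.eigenvectorUnitary : Matrix n n ℂ) * diagonal (Complex.ofReal ∘ Real.sqrt ∘ (Matrix.posSemidef_conjTranspose_mul_self X).1.eigenvalues) * (star (Matrix.posSemidef_conjTranspose_mul_self X).1.eigenvectorUnitary : Matrix n n ℂ)).trace).re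

/-- Smallest eigenvalue of a Hermitian matrix (junk value `0` otherwise). -/
noncomputable def lamMin {n : Type*} [Fintype n] [DecidableEq n] (A : Matrix n n ℂ) : ℝ :=
  if hA : A.IsHermitian then ⨅ i, hA.eigenvalues i else 0

/-- Largest eigenvalue of a Hermitian matrix (junk value `0` otherwise). -/
noncomputable def lamMax {n : Type*} [Fintype n] [DecidableEq n] (A : Matrix n n ℂ) : ℝ :=
  if hA : A.IsHermitian then ⨆ i, hA.eigenvalues i else 0

/-- Operator norm: largest eigenvalue of `√(Xᴴ X)` (largest singular value). -/
noncomputable def opNorm {n : Type*} [Fintype n] [DecidableEq n] (X : Matrix n n ℂ) : ℝ :=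
  ⨆ i, (show (((Matrix.posSemidef_conjTranspose_mul_self X).1.eigenvectorUnitary : Matrix n n ℂ) * diagonal (Complex.ofReal ∘ Real.sqrt ∘ (Matrix.posSemidef_conjTranspose_mul_self X).1.eigenvalues) * (star (Matrix.posSemidef_conjTranspose_mul_self X).1.eigenvectorUnitary : Matrix n n ℂ)).IsHermitian by
    rw [Matrix.star_eq_conjTranspose]
    exact Matrix.isHermitian_mul_mul_conjTranspose _ (Matrix.isHermitian_diagonal_of_self_adjoint _
      (by ext i; simp))).eigenvalues i

/-! Along `C s = (1 - s) • A + s • B` the function `φ s = Tr (C s log C s - C s)` has derivative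
`Tr ((B - A) log C s)`, so the theorem is the fundamental theorem of calculus for `φ` on `[0, 1]`,
rearranged. The formula `d/ds Tr f(C s) = Tr (C' f'(C s))` holds for polynomials `f` by cyclicity
of the trace. Since Loewner intervals are convex, every `C s` has its spectrum in an interval
`[m, M]`, `m > 0`, containing those of `A` and `B`; the formula then passes to `x log x - x`
through polynomials converging to it on `[m, M]` together with their derivatives, because
`‖g(X)‖ ≤ sup |g|` over the spectrum of `X`. -/

section

open Set Filter Topology Polynomial
open scoped Matrix.Norms.L2Operator MatrixOrder

theorem Polynomial.derivative_surjective {K : Type*} [Field K] [CharZero K] :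
    Function.Surjective (derivative : K[X] → K[X]) := by
  intro q
  induction q using Polynomial.induction_on' with
  | add p q hp hq =>
    obtain ⟨P, rfl⟩ := hp
    obtain ⟨Q, rfl⟩ := hq
    exact ⟨P + Q, derivative_add⟩
  | monomial k a =>
    refine ⟨C (a / (k + 1)) * X ^ (k + 1), ?_⟩
    rw [derivative_C_mul_X_pow, ← C_mul_X_pow_eq_monomial]
    push_cast
    field_simp

theorem tendstoUniformlyOn_of_dist_le {ι α β : Type*} [PseudoMetricSpace β] {l : Filter ι}
    {F : ι → α → β} {f : α → β} {s : Set α} {δ : ι → ℝ} (hδ : Tendsto δ l (𝓝 0))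
    (h : ∀ i, ∀ x ∈ s, dist (F i x) (f x) ≤ δ i) : TendstoUniformlyOn F f l s :=
  Metric.tendstoUniformlyOn_iff.mpr fun ε hε =>
    (hδ.eventually (gt_mem_nhds hε)).mono fun i hi x hx => by
      rw [dist_comm]
      exact (h i x hx).trans_lt hi

theorem exists_polynomial_tendstoUniformlyOn_and_derivative {f f' : ℝ → ℝ} {a b : ℝ}
    (hf : ∀ x ∈ Icc a b, HasDerivWithinAt f (f' x) (Icc a b) x)
    (hf' : ContinuousOn f' (Icc a b)) :
    ∃ p : ℕ → ℝ[X], TendstoUniformlyOn (fun k x => (p k).eval x) f atTop (Icc a b) ∧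
      TendstoUniformlyOn (fun k x => (derivative (p k)).eval x) f' atTop (Icc a b) := by
  have hδ : Tendsto (fun k : ℕ => 1 / ((k : ℝ) + 1)) atTop (𝓝 0) :=
    tendsto_one_div_add_atTop_nhds_zero_nat
  have hq : ∀ k : ℕ, ∃ q : ℝ[X], ∀ x ∈ Icc a b, |q.eval x - f' x| < 1 / ((k : ℝ) + 1) :=
    fun k => exists_polynomial_near_of_continuousOn a b f' hf' _ (by positivity)
  choose q hq using hq
  choose P hP using fun k => derivative_surjective (q k)
  -- antiderivatives of the approximations of `f'`, normalised to agree with `f` at `a`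
  set p : ℕ → ℝ[X] := fun k => P k + C (f a - (P k).eval a) with hp
  have hp' : ∀ k, derivative (p k) = q k := by simp [hp, hP]
  refine ⟨p, tendstoUniformlyOn_of_dist_le (zero_mul (b - a) ▸ hδ.mul_const (b - a))
    fun k x hx => ?_, tendstoUniformlyOn_of_dist_le hδ fun k x hx => ?_⟩
  · have hderiv : ∀ y ∈ Icc a b, HasDerivWithinAt (fun y => (p k).eval y - f y)
        ((q k).eval y - f' y) (Icc a b) y := fun y hy =>
      (((p k).hasDerivAt y).hasDerivWithinAt.sub (hf y hy)).congr_deriv (by rw [hp'])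
    have hpa : (p k).eval a = f a := by simp [hp]
    have hmvt := (convex_Icc a b).norm_image_sub_le_of_norm_hasDerivWithin_le hderiv
      (fun y hy => (hq k y hy).le) (left_mem_Icc.mpr (hx.1.trans hx.2)) hx
    rw [hpa, sub_self, sub_zero] at hmvt
    calc dist ((p k).eval x) (f x) ≤ 1 / ((k : ℝ) + 1) * ‖x - a‖ := hmvt
      _ ≤ 1 / ((k : ℝ) + 1) * (b - a) := by
        rw [Real.norm_of_nonneg (sub_nonneg.mpr hx.1)]
        gcongr
        exact hx.2
  · rw [Real.dist_eq, hp']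
    exact (hq k x hx).le

theorem Set.Finite.exists_pos_subset_Icc {S : Set ℝ} (hS : S.Finite) (hpos : S ⊆ Ioi 0) :
    ∃ m M : ℝ, 0 < m ∧ S ⊆ Icc m M := by
  obtain ⟨M, hM⟩ := hS.bddAbove
  obtain ⟨m, hm, hmin⟩ := exists_min_image (insert 1 S) id (hS.insert 1) (insert_nonempty 1 S)
  refine ⟨m, M, ?_, fun x hx => ⟨hmin x (mem_insert_of_mem 1 hx), hM hx⟩⟩
  rcases hm with rfl | hm
  exacts [one_pos, hpos hm]

theorem convex_setOf_isSelfAdjoint_spectrum_subset_Icc {A : Type*} [CStarAlgebra A]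
    [PartialOrder A] [StarOrderedRing A] (a b : ℝ) :
    Convex ℝ {x : A | IsSelfAdjoint x ∧ spectrum ℝ x ⊆ Icc a b} := by
  have hsa : Convex ℝ {x : A | IsSelfAdjoint x} := fun x hx y hy s t _ _ _ =>
    ((IsSelfAdjoint.all s).smul hx).add ((IsSelfAdjoint.all t).smul hy)
  have hIcc : {x : A | IsSelfAdjoint x ∧ spectrum ℝ x ⊆ Icc a b} =
      {x | IsSelfAdjoint x} ∩ Icc (algebraMap ℝ A a) (algebraMap ℝ A b) := by
    ext x
    simp only [mem_ofPred_eq, mem_inter_iff, mem_Icc]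
    refine and_congr_right fun hx => ?_
    rw [algebraMap_le_iff_le_spectrum hx, le_algebraMap_iff_spectrum_le hx]
    exact ⟨fun h => ⟨fun y hy => (h hy).1, fun y hy => (h hy).2⟩,
      fun h y hy => ⟨h.1 y hy, h.2 y hy⟩⟩
  rw [hIcc]
  exact hsa.inter (convex_Icc _ _)

theorem tendstoUniformlyOn_cfc {A X ι : Type*} [NormedRing A] [StarRing A] [NormedAlgebra ℝ A]
    [IsometricContinuousFunctionalCalculus ℝ A IsSelfAdjoint] {l : Filter ι}
    {F : ι → ℝ → ℝ} {f : ℝ → ℝ} {I : Set ℝ} {a : X → A} {U : Set X}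
    (hF : TendstoUniformlyOn F f l I) (hFc : ∀ i, ContinuousOn (F i) I) (hfc : ContinuousOn f I)
    (ha : ∀ x ∈ U, spectrum ℝ (a x) ⊆ I) :
    TendstoUniformlyOn (fun i x => cfc (F i) (a x)) (fun x => cfc f (a x)) l U := by
  refine Metric.tendstoUniformlyOn_iff.mpr fun ε hε => ?_
  filter_upwards [Metric.tendstoUniformlyOn_iff.mp hF (ε / 2) (half_pos hε)] with i hi x hx
  rw [dist_eq_norm, ← cfc_sub f (F i) (a x) (hfc.mono (ha x hx)) ((hFc i).mono (ha x hx))]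
  refine (norm_cfc_le (half_pos hε).le fun y hy => ?_).trans_lt (half_lt_self hε)
  exact (hi y (ha x hx hy)).le

namespace Matrix

variable {n : Type*} [Fintype n]

noncomputable def traceCLM : Matrix n n ℂ →L[ℝ] ℂ :=
  LinearMap.toContinuousLinearMap ((traceLinearMap n ℂ ℂ).restrictScalars ℝ)

@[simp] theorem traceCLM_apply (X : Matrix n n ℂ) : traceCLM X = X.trace := rfl

variable [DecidableEq n]

theorem PosDef.spectrum_subset_Ioi {A : Matrix n n ℂ} (hA : A.PosDef) :
    spectrum ℝ A ⊆ Ioi 0 := by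
  rw [hA.1.spectrum_real_eq_range_eigenvalues]
  rintro _ ⟨i, rfl⟩
  exact hA.eigenvalues_pos i

theorem trace_sum_pow_mul_mul_pow (X D : Matrix n n ℂ) (k : ℕ) :
    (∑ i ∈ Finset.range k, X ^ (k.pred - i) * D * X ^ i).trace = k * (D * X ^ k.pred).trace := by
  rw [trace_sum, Finset.sum_congr rfl fun i hi => ?_, Finset.sum_const, Finset.card_range,
    nsmul_eq_mul]
  rw [trace_mul_cycle, ← pow_add, Nat.add_sub_cancel' (Nat.le_pred_of_lt (Finset.mem_range.mp hi)),
    trace_mul_comm]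

theorem hasDerivAt_trace_aeval {C : ℝ → Matrix n n ℂ} {D : Matrix n n ℂ} {s : ℝ}
    (hC : HasDerivAt C D s) (p : ℝ[X]) :
    HasDerivAt (fun t => (aeval (C t) p).trace) (D * aeval (C s) (derivative p)).trace s := by
  induction p using Polynomial.induction_on' with
  | add p q hp hq =>
    simpa only [map_add, trace_add, derivative_add, mul_add] using hp.fun_add hq
  | monomial k a =>
    have hpow := traceCLM.hasFDerivAt.comp_hasDerivAt s (hC.fun_pow' k)
    simp only [Function.comp_def, traceCLM_apply, trace_sum_pow_mul_mul_pow] at hpow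
    have hfun : (fun t => (aeval (C t) (monomial k a)).trace) = fun t => a • (C t ^ k).trace := by
      funext t
      rw [aeval_monomial, ← Algebra.smul_def, trace_smul]
    rw [hfun]
    refine (hpow.const_smul a).congr_deriv ?_
    rw [derivative_monomial, aeval_monomial, ← Algebra.smul_def, mul_smul_comm, trace_smul,
      Nat.pred_eq_sub_one, mul_smul, ← nsmul_eq_mul, Nat.cast_smul_eq_nsmul]

theorem hasDerivAt_trace_cfc {C : ℝ → Matrix n n ℂ} {D : Matrix n n ℂ} {U : Set ℝ}
    (hU : IsOpen U) (hC : ∀ s ∈ U, HasDerivAt C D s) (hCsa : ∀ s ∈ U, IsSelfAdjoint (C s))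
    {a b : ℝ} (hspec : ∀ s ∈ U, spectrum ℝ (C s) ⊆ Icc a b) {f f' : ℝ → ℝ}
    (hf : ∀ x ∈ Icc a b, HasDerivWithinAt f (f' x) (Icc a b) x)
    (hf' : ContinuousOn f' (Icc a b)) {s : ℝ} (hs : s ∈ U) :
    HasDerivAt (fun t => (cfc f (C t)).trace) (D * cfc f' (C s)).trace s := by
  obtain ⟨p, hp, hp'⟩ := exists_polynomial_tendstoUniformlyOn_and_derivative hf hf'
  have hfc : ContinuousOn f (Icc a b) := fun x hx => (hf x hx).continuousWithinAt
  have hval := tendstoUniformlyOn_cfc hp (fun k => (p k).continuousOn) hfc hspec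
  have hder := (traceCLM.comp (ContinuousLinearMap.mul ℝ _ D)).uniformContinuous
    |>.comp_tendstoUniformlyOn
      (tendstoUniformlyOn_cfc hp' (fun k => (derivative (p k)).continuousOn) hf' hspec)
  refine hasDerivAt_of_tendstoUniformlyOn (f := fun k t => (aeval (C t) (p k)).trace) hU
    (hder.congr (.of_forall fun k t ht => ?_))
    (.of_forall fun k t ht => hasDerivAt_trace_aeval (hC t ht) (p k)) (fun t ht => ?_) hs
  · simp [cfc_polynomial _ _ (hCsa t ht)]
  · have := (traceCLM.continuous.tendsto _).comp (hval.tendsto_at ht)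
    simpa [Function.comp_def, cfc_polynomial _ _ (hCsa t ht)] using this

theorem integral_re_trace_mul_cfc {C : ℝ → Matrix n n ℂ} {D : Matrix n n ℂ} {u v : ℝ}
    (huv : u ≤ v) (hC : ∀ s ∈ Icc u v, HasDerivAt C D s)
    (hCsa : ∀ s ∈ Icc u v, IsSelfAdjoint (C s))
    {a b : ℝ} (hspec : ∀ s ∈ Icc u v, spectrum ℝ (C s) ⊆ Icc a b) {f f' : ℝ → ℝ}
    (hf : ∀ x ∈ Icc a b, HasDerivWithinAt f (f' x) (Icc a b) x)
    (hf' : ContinuousOn f' (Icc a b)) :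
    ∫ s in u..v, ((D * cfc f' (C s)).trace).re =
      ((cfc f (C v)).trace).re - ((cfc f (C u)).trace).re := by
  have hCc : ContinuousOn C (Icc u v) := fun s hs => (hC s hs).continuousAt.continuousWithinAt
  have hfc : ContinuousOn f (Icc a b) := fun x hx => (hf x hx).continuousWithinAt
  have hint : IntervalIntegrable (fun s => (D * cfc f' (C s)).trace) volume u v := by
    refine ContinuousOn.intervalIntegrable ?_
    rw [uIcc_of_le huv]
    exact (traceCLM.comp (ContinuousLinearMap.mul ℝ _ D)).continuous.comp_continuousOn
      (hCc.cfc' isCompact_Icc f' hspec hCsa hf')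
  have hFTC := intervalIntegral.integral_eq_sub_of_hasDerivAt_of_le huv
    (traceCLM.continuous.comp_continuousOn (hCc.cfc' isCompact_Icc f hspec hCsa hfc))
    (fun s hs => hasDerivAt_trace_cfc isOpen_Ioo (fun t ht => hC t (Ioo_subset_Icc_self ht))
      (fun t ht => hCsa t (Ioo_subset_Icc_self ht)) (fun t ht => hspec t (Ioo_subset_Icc_self ht))
      hf hf' hs) hint
  simpa [hFTC] using intervalIntegral.intervalIntegral_re hint

end Matrix

variable {n : Type*} [Fintype n] [DecidableEq n]

theorem mlog_eq_cfc {X : Matrix n n ℂ} (hX : IsSelfAdjoint X) : mlog X = cfc Real.log X := by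
  rw [mlog, dif_pos hX.isHermitian, hX.isHermitian.cfc_eq]

theorem cfc_mul_log_sub_self {X : Matrix n n ℂ} (hX : IsSelfAdjoint X) :
    cfc (fun x => x * Real.log x - x) X = X * mlog X - X := by
  have hcont (g : ℝ → ℝ) : ContinuousOn g (spectrum ℝ X) := finite_real_spectrum.continuousOn g
  rw [cfc_sub _ _ X (hcont _) (hcont _), cfc_mul _ _ X (hcont _) (hcont _), cfc_id' ℝ X,
    mlog_eq_cfc hX]

theorem integral_re_trace_mul_mlog_segment {A B : Matrix n n ℂ} (hA : A.PosDef) (hB : B.PosDef) :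
    ∫ s in (0 : ℝ)..1, (((B - A) * mlog ((1 - s) • A + s • B)).trace).re =
      ((B * mlog B - B).trace).re - ((A * mlog A - A).trace).re := by
  obtain ⟨m, M, hm, hspec⟩ := (finite_real_spectrum.union finite_real_spectrum).exists_pos_subset_Icc
    (union_subset hA.spectrum_subset_Ioi hB.spectrum_subset_Ioi)
  have hpath : ∀ s ∈ Icc (0 : ℝ) 1,
      IsSelfAdjoint ((1 - s) • A + s • B) ∧ spectrum ℝ ((1 - s) • A + s • B) ⊆ Icc m M :=
    fun s hs => convex_setOf_isSelfAdjoint_spectrum_subset_Icc m M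
      ⟨hA.1, subset_union_left.trans hspec⟩ ⟨hB.1, subset_union_right.trans hspec⟩
      (sub_nonneg.mpr hs.2) hs.1 (sub_add_cancel 1 s)
  have hderiv (s : ℝ) : HasDerivAt (fun s : ℝ => (1 - s) • A + s • B) (B - A) s :=
    AffineMap.hasDerivAt_lineMap.congr_of_eventuallyEq
      (.of_forall fun t => (AffineMap.lineMap_apply_module A B t).symm)
  have hf : ∀ x ∈ Icc m M,
      HasDerivWithinAt (fun x => x * Real.log x - x) (Real.log x) (Icc m M) x := fun x hx =>
    (((Real.hasDerivAt_mul_log (hm.trans_le hx.1).ne').fun_sub (hasDerivAt_id' x)).congr_deriv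
      (add_sub_cancel_right _ _)).hasDerivWithinAt
  have hFTC := integral_re_trace_mul_cfc zero_le_one (fun s _ => hderiv s)
    (fun s hs => (hpath s hs).1) (fun s hs => (hpath s hs).2) hf
    (Real.continuousOn_log.mono fun x hx => (hm.trans_le hx.1).ne')
  have hlog (s : ℝ) : cfc Real.log ((1 - s) • A + s • B) = mlog ((1 - s) • A + s • B) :=
    (mlog_eq_cfc (((IsSelfAdjoint.all _).smul hA.1).add ((IsSelfAdjoint.all _).smul hB.1))).symm
  simp only [hlog, sub_self, zero_smul, one_smul, zero_add, sub_zero, add_zero] at hFTC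
  rwa [cfc_mul_log_sub_self hB.1, cfc_mul_log_sub_self hA.1] at hFTC

end

/-- Integral representation of the relative entropy along the linear path
`C(s) = (1-s)A + sB`. -/
theorem relEntropy_integral_rep {n : Type*} [Fintype n] [DecidableEq n]
    (A B : Matrix n n ℂ) (hA : A.PosDef) (hB : B.PosDef) :
    qRelEnt A B = ((A - B).trace).re + (((B - A) * mlog B).trace).re -
      ∫ s in (0 : ℝ)..1, (((B - A) * mlog ((1 - s) • A + s • B)).trace).re := by
  rw [integral_re_trace_mul_mlog_segment hA hB, qRelEnt]
  simp only [mul_sub, sub_mul, trace_sub, Complex.sub_re]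
  ring
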